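/- Let D be a double Boolean algebra. The map h defined by h(x) := (F_{¬x}, I_x) is a well-defined quasi-injective dBa homomorphism from D into the dBa of clopen object oriented protoconcepts of K^T_pr(D) (i.e., h preserves ⊓, ⊔, ¬, ⌟, ⊤, ⊥, and x ⊑ y ⟺ h(x) ⊑ h(y) for all x,y ∈ D). Moreover, the restriction of h to D_p is a dBa isomorphism from D_p onto the dBa of clopen object oriented semiconcepts of K^T_pr(D). If D is contextual, then h is injective. -/
import Mathlib


universe u v

/-- A double Boolean algebra (dBa). -/
structure DBA (D : Type u) where
  sup : D → D → D
  inf : D → D → D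
  neg : D → D
  dneg : D → D
  top : D
  bot : D
  ax1a : ∀ x y, inf (inf x x) y = inf x y
  ax2a : ∀ x y, inf x y = inf y x
  ax3a : ∀ x y z, inf x (inf y z) = inf (inf x y) z
  ax4a : ∀ x, neg (inf x x) = neg x
  ax5a : ∀ x y, inf x (sup x y) = inf x x
  ax6a : ∀ x y z, inf x (neg (inf (neg y) (neg z))) =
      neg (inf (neg (inf x y)) (neg (inf x z)))
  ax7a : ∀ x y, inf x (neg (inf (neg x) (neg y))) = inf x x
  ax8a : ∀ x y, neg (neg (inf x y)) = inf x y
  ax9a : ∀ x, inf x (neg x) = bot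
  ax10a : neg bot = inf top top
  ax11a : neg top = bot
  ax1b : ∀ x y, sup (sup x x) y = sup x y
  ax2b : ∀ x y, sup x y = sup y x
  ax3b : ∀ x y z, sup x (sup y z) = sup (sup x y) z
  ax4b : ∀ x, dneg (sup x x) = dneg x
  ax5b : ∀ x y, sup x (inf x y) = sup x x
  ax6b : ∀ x y z, sup x (dneg (sup (dneg y) (dneg z))) =
      dneg (sup (dneg (sup x y)) (dneg (sup x z)))
  ax7b : ∀ x y, sup x (dneg (sup (dneg x) (dneg y))) = sup x x
  ax8b : ∀ x y, dneg (dneg (sup x y)) = sup x y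
  ax9b : ∀ x, sup x (dneg x) = top
  ax10b : dneg top = sup bot bot
  ax11b : dneg bot = top
  ax12 : ∀ x, sup (inf x x) (inf x x) = inf (sup x x) (sup x x)

namespace DBA

variable {D : Type u} {E : Type v}

/-- x ∨ y := ¬(¬x ⊓ ¬y) -/
def vee (A : DBA D) (x y : D) : D := A.neg (A.inf (A.neg x) (A.neg y))

/-- x ∧ y := ⌟(⌟x ⊔ ⌟y) -/
def wedge (A : DBA D) (x y : D) : D := A.dneg (A.sup (A.dneg x) (A.dneg y))

/-- The quasi-order ⊑. -/
def le (A : DBA D) (x y : D) : Prop := A.inf x y = A.inf x x ∧ A.sup x y = A.sup y y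

def IsFilter (A : DBA D) (F : Set D) : Prop :=
  (∀ x ∈ F, ∀ y ∈ F, A.inf x y ∈ F) ∧ ∀ x ∈ F, ∀ z, A.le x z → z ∈ F

def IsIdeal (A : DBA D) (I : Set D) : Prop :=
  (∀ x ∈ I, ∀ y ∈ I, A.sup x y ∈ I) ∧ ∀ x ∈ I, ∀ z, A.le z x → z ∈ I

def IsPrimaryFilter (A : DBA D) (F : Set D) : Prop :=
  A.IsFilter F ∧ F ≠ Set.univ ∧ ∀ x, x ∈ F ∨ A.neg x ∈ F

def IsPrimaryIdeal (A : DBA D) (I : Set D) : Prop :=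
  A.IsIdeal I ∧ I ≠ Set.univ ∧ ∀ x, x ∈ I ∨ A.dneg x ∈ I

def Pure (A : DBA D) : Prop := ∀ x, A.inf x x = x ∨ A.sup x x = x

def Contextual (A : DBA D) : Prop := ∀ x y, A.le x y → A.le y x → x = y

def FullyContextual (A : DBA D) : Prop :=
  A.Contextual ∧
    ∀ y x, A.inf y y = y → A.sup x x = x → A.sup y y = A.inf x x →
      ∃! z, A.inf z z = y ∧ A.sup z z = x

/-- D_p = D_⊓ ∪ D_⊔ -/
def Dp (A : DBA D) : Set D := {x | A.inf x x = x} ∪ {x | A.sup x x = x}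

def IsHom (A : DBA D) (B : DBA E) (h : D → E) : Prop :=
  (∀ x y, h (A.inf x y) = B.inf (h x) (h y)) ∧
  (∀ x y, h (A.sup x y) = B.sup (h x) (h y)) ∧
  (∀ x, h (A.neg x) = B.neg (h x)) ∧
  (∀ x, h (A.dneg x) = B.dneg (h x)) ∧
  h A.top = B.top ∧ h A.bot = B.bot

def IsHomOn (A : DBA D) (B : DBA E) (S : Set D) (h : D → E) : Prop :=
  (∀ x ∈ S, ∀ y ∈ S, h (A.inf x y) = B.inf (h x) (h y)) ∧
  (∀ x ∈ S, ∀ y ∈ S, h (A.sup x y) = B.sup (h x) (h y)) ∧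
  (∀ x ∈ S, h (A.neg x) = B.neg (h x)) ∧
  (∀ x ∈ S, h (A.dneg x) = B.dneg (h x)) ∧
  h A.top = B.top ∧ h A.bot = B.bot

end DBA

section FCA

variable {G : Type u} {M : Type v}

/-- B^◇ -/
def odia (R : G → M → Prop) (B : Set M) : Set G := {g | ∃ m ∈ B, R g m}
/-- B^□ -/
def obox (R : G → M → Prop) (B : Set M) : Set G := {g | ∀ m, R g m → m ∈ B}
/-- A^◆ -/
def obdia (R : G → M → Prop) (A : Set G) : Set M := {m | ∃ g ∈ A, R g m}
/-- A^■ -/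
def obbox (R : G → M → Prop) (A : Set G) : Set M := {m | ∀ g, R g m → g ∈ A}

def pinf (R : G → M → Prop) (p q : Set G × Set M) : Set G × Set M :=
  (p.1 ∪ q.1, obbox R (p.1 ∪ q.1))
def psup (R : G → M → Prop) (p q : Set G × Set M) : Set G × Set M :=
  (odia R (p.2 ∩ q.2), p.2 ∩ q.2)
def pneg (R : G → M → Prop) (p : Set G × Set M) : Set G × Set M :=
  (p.1ᶜ, obbox R p.1ᶜ)
def pdneg (R : G → M → Prop) (p : Set G × Set M) : Set G × Set M :=
  (odia R p.2ᶜ, p.2ᶜ)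
def ptop : Set G × Set M := (∅, ∅)
def pbot : Set G × Set M := (Set.univ, Set.univ)
/-- quasi-order on pairs: (A,B) ⊑ (C,D) iff C ⊆ A and D ⊆ B -/
def ple (p q : Set G × Set M) : Prop := q.1 ⊆ p.1 ∧ q.2 ⊆ p.2

/-- object oriented protoconcept -/
def IsProto (R : G → M → Prop) (p : Set G × Set M) : Prop :=
  odia R (obbox R p.1) = odia R p.2
/-- object oriented semiconcept -/
def IsSemi (R : G → M → Prop) (p : Set G × Set M) : Prop :=
  obbox R p.1 = p.2 ∨ odia R p.2 = p.1

/-- continuity of the relation R -/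
def ContRel [TopologicalSpace G] [TopologicalSpace M] (R : G → M → Prop) : Prop :=
  ∀ O : Set M, IsOpen O → IsOpen (odia R O) ∧ IsOpen (obox R O)
/-- continuity of the converse relation R⁻¹ -/
def ContRelInv [TopologicalSpace G] [TopologicalSpace M] (R : G → M → Prop) : Prop :=
  ∀ O : Set G, IsOpen O → IsOpen (obdia R O) ∧ IsOpen (obbox R O)

def IsClopenProto [TopologicalSpace G] [TopologicalSpace M] (R : G → M → Prop)
    (p : Set G × Set M) : Prop :=
  IsProto R p ∧ IsClopen p.1 ∧ IsClopen p.2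

def IsClopenSemi [TopologicalSpace G] [TopologicalSpace M] (R : G → M → Prop)
    (p : Set G × Set M) : Prop :=
  IsSemi R p ∧ IsClopen p.1 ∧ IsClopen p.2

def pmap {G' : Type*} {M' : Type*} (α : G → G') (β : M → M') (p : Set G' × Set M') :
    Set G × Set M := (α ⁻¹' p.1, β ⁻¹' p.2)

end FCA

section StoneDBA

variable {D : Type u}

/-- the set of primary filters of a dBa, as a type -/
def PrimF (A : DBA D) : Type u := {F : Set D // A.IsPrimaryFilter F}
/-- the set of primary ideals of a dBa, as a type -/
def PrimI (A : DBA D) : Type u := {I : Set D // A.IsPrimaryIdeal I}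
/-- F ∇ I iff F ∩ I = ∅ -/
def nabla (A : DBA D) : PrimF A → PrimI A → Prop := fun F I => F.val ∩ I.val = ∅
/-- F_x -/
def Fset (A : DBA D) (x : D) : Set (PrimF A) := {F | x ∈ F.val}
/-- I_x -/
def Iset (A : DBA D) (x : D) : Set (PrimI A) := {I | x ∈ I.val}

/-- the topology T on primary filters, with the F_x as a subbase of closed sets -/
def filtTop (A : DBA D) : TopologicalSpace (PrimF A) :=
  TopologicalSpace.generateFrom {U | ∃ x : D, U = (Fset A x)ᶜ}
/-- the topology J on primary ideals, with the I_x as a subbase of closed sets -/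
def idlTop (A : DBA D) : TopologicalSpace (PrimI A) :=
  TopologicalSpace.generateFrom {U | ∃ x : D, U = (Iset A x)ᶜ}

/-- the map h(x) := (F_{¬x}, I_x) -/
def protoEmb (A : DBA D) (x : D) : Set (PrimF A) × Set (PrimI A) :=
  (Fset A (A.neg x), Iset A x)

end StoneDBA

section SemiPrim

variable {G : Type u} {M : Type v} [TopologicalSpace G] [TopologicalSpace M]

/-- a primary filter of the dBa of clopen object oriented semiconcepts -/
def IsSemiPrimFilter (R : G → M → Prop) (F : Set (Set G × Set M)) : Prop :=
  (∀ p ∈ F, IsClopenSemi R p) ∧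
  (∀ p ∈ F, ∀ q ∈ F, pinf R p q ∈ F) ∧
  (∀ p ∈ F, ∀ z, IsClopenSemi R z → ple p z → z ∈ F) ∧
  F ≠ {p | IsClopenSemi R p} ∧
  (∀ p, IsClopenSemi R p → (p ∈ F ∨ pneg R p ∈ F))

/-- a primary ideal of the dBa of clopen object oriented semiconcepts -/
def IsSemiPrimIdeal (R : G → M → Prop) (I : Set (Set G × Set M)) : Prop :=
  (∀ p ∈ I, IsClopenSemi R p) ∧
  (∀ p ∈ I, ∀ q ∈ I, psup R p q ∈ I) ∧
  (∀ p ∈ I, ∀ z, IsClopenSemi R z → ple z p → z ∈ I) ∧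
  I ≠ {p | IsClopenSemi R p} ∧
  (∀ p, IsClopenSemi R p → (p ∈ I ∨ pdneg R p ∈ I))

def SemiPF (R : G → M → Prop) := {F : Set (Set G × Set M) // IsSemiPrimFilter R F}
def SemiPI (R : G → M → Prop) := {I : Set (Set G × Set M) // IsSemiPrimIdeal R I}

def semiPFTop (R : G → M → Prop) : TopologicalSpace (SemiPF R) :=
  TopologicalSpace.generateFrom
    {U | ∃ p, IsClopenSemi R p ∧ U = {F : SemiPF R | p ∈ F.val}ᶜ}
def semiPITop (R : G → M → Prop) : TopologicalSpace (SemiPI R) :=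
  TopologicalSpace.generateFrom
    {U | ∃ p, IsClopenSemi R p ∧ U = {I : SemiPI R | p ∈ I.val}ᶜ}

end SemiPrim

namespace DBA

variable {D : Type u} (A : DBA D)

lemma inf_assoc' (x y z : D) : A.inf (A.inf x y) z = A.inf x (A.inf y z) :=
  (A.ax3a x y z).symm

lemma inf_left_comm (x y z : D) : A.inf x (A.inf y z) = A.inf y (A.inf x z) := by
  rw [A.ax3a, A.ax2a x y, ← A.ax3a]

lemma inf_self_inf (x y : D) : A.inf x (A.inf x y) = A.inf x y := by
  rw [A.ax3a, A.ax1a]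

lemma inf_inf_self (x y : D) : A.inf x (A.inf y y) = A.inf x y := by
  rw [A.ax2a, A.ax1a, A.ax2a]

lemma inf_idem2 (x y : D) : A.inf (A.inf x y) (A.inf x y) = A.inf x y := by
  rw [A.inf_assoc', A.inf_left_comm, A.inf_self_inf, A.inf_left_comm, A.inf_inf_self]

lemma sup_assoc' (x y z : D) : A.sup (A.sup x y) z = A.sup x (A.sup y z) :=
  (A.ax3b x y z).symm

lemma sup_left_comm (x y z : D) : A.sup x (A.sup y z) = A.sup y (A.sup x z) := by
  rw [A.ax3b, A.ax2b x y, ← A.ax3b]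

lemma sup_self_sup (x y : D) : A.sup x (A.sup x y) = A.sup x y := by
  rw [A.ax3b, A.ax1b]

lemma sup_sup_self (x y : D) : A.sup x (A.sup y y) = A.sup x y := by
  rw [A.ax2b, A.ax1b, A.ax2b]

lemma sup_idem2 (x y : D) : A.sup (A.sup x y) (A.sup x y) = A.sup x y := by
  rw [A.sup_assoc', A.sup_left_comm, A.sup_self_sup, A.sup_left_comm, A.sup_sup_self]

lemma neg_neg' (x : D) : A.neg (A.neg x) = A.inf x x := by
  rw [← A.ax4a x, A.ax8a]

lemma dneg_dneg' (x : D) : A.dneg (A.dneg x) = A.sup x x := by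
  rw [← A.ax4b x, A.ax8b]

lemma neg_idem (x : D) : A.inf (A.neg x) (A.neg x) = A.neg x := by
  rw [← A.neg_neg' (A.neg x), A.neg_neg' x, A.ax4a]

lemma dneg_idem (x : D) : A.sup (A.dneg x) (A.dneg x) = A.dneg x := by
  rw [← A.dneg_dneg' (A.dneg x), A.dneg_dneg' x, A.ax4b]

lemma inf_bot (x : D) : A.inf x A.bot = A.bot := by
  calc A.inf x A.bot = A.inf x (A.inf x (A.neg x)) := by rw [A.ax9a]
  _ = A.inf (A.inf x x) (A.neg x) := A.ax3a ..
  _ = A.inf x (A.neg x) := by rw [A.ax1a]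
  _ = A.bot := A.ax9a x

lemma bot_inf (x : D) : A.inf A.bot x = A.bot := by rw [A.ax2a, A.inf_bot]

lemma sup_top (x : D) : A.sup x A.top = A.top := by
  calc A.sup x A.top = A.sup x (A.sup x (A.dneg x)) := by rw [A.ax9b]
  _ = A.sup (A.sup x x) (A.dneg x) := A.ax3b ..
  _ = A.sup x (A.dneg x) := by rw [A.ax1b]
  _ = A.top := A.ax9b x

lemma top_sup (x : D) : A.sup A.top x = A.top := by rw [A.ax2b, A.sup_top]

lemma inf_top (x : D) : A.inf x A.top = A.inf x x := by
  rw [← A.ax9b x, A.ax5a]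

lemma sup_bot (x : D) : A.sup x A.bot = A.sup x x := by
  rw [← A.ax9a x, A.ax5b]

lemma le_refl' (x : D) : A.le x x := ⟨rfl, rfl⟩

lemma le_trans' {x y z : D} (hxy : A.le x y) (hyz : A.le y z) : A.le x z := by
  obtain ⟨h1, h2⟩ := hxy
  obtain ⟨h3, h4⟩ := hyz
  constructor
  · calc A.inf x z = A.inf (A.inf x x) z := by rw [A.ax1a]
    _ = A.inf (A.inf x y) z := by rw [h1]
    _ = A.inf x (A.inf y z) := A.inf_assoc' ..
    _ = A.inf x (A.inf y y) := by rw [h3]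
    _ = A.inf x y := A.inf_inf_self ..
    _ = A.inf x x := h1
  · calc A.sup x z = A.sup x (A.sup z z) := (A.sup_sup_self x z).symm
    _ = A.sup x (A.sup y z) := by rw [← h4]
    _ = A.sup (A.sup x y) z := A.ax3b ..
    _ = A.sup (A.sup y y) z := by rw [h2]
    _ = A.sup y z := A.ax1b ..
    _ = A.sup z z := h4

lemma bot_le (x : D) : A.le A.bot x :=
  ⟨by rw [A.bot_inf, A.bot_inf], by rw [A.ax2b, A.sup_bot]⟩

lemma le_top (x : D) : A.le x A.top :=
  ⟨A.inf_top x, by rw [A.sup_top, A.sup_top]⟩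

lemma le_of_inf_eq {x y : D} (h : A.inf x y = x) : A.le x y := by
  have hx : A.inf x x = x := by
    conv_lhs => rw [← h]
    rw [A.inf_idem2, h]
  constructor
  · rw [h, hx]
  · have h' : A.inf y x = x := by rw [A.ax2a]; exact h
    rw [A.ax2b, ← h', A.ax5b]

lemma le_of_sup_eq {x y : D} (h : A.sup x y = y) : A.le x y := by
  have hy : A.sup y y = y := by
    conv_lhs => rw [← h]
    rw [A.sup_idem2, h]
  constructor
  · rw [← h, A.ax5a]
  · rw [h, hy]

lemma inf_le_left (x y : D) : A.le (A.inf x y) x := by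
  apply A.le_of_inf_eq
  rw [A.inf_assoc', A.ax2a y x, A.inf_self_inf]

lemma inf_le_right (x y : D) : A.le (A.inf x y) y := by
  apply A.le_of_inf_eq
  rw [A.inf_assoc', A.inf_inf_self]

lemma le_sup_left (x y : D) : A.le x (A.sup x y) := by
  apply A.le_of_sup_eq
  rw [A.ax3b, A.ax1b]

lemma le_sup_right (x y : D) : A.le y (A.sup x y) := by
  apply A.le_of_sup_eq
  rw [A.sup_left_comm, A.sup_sup_self]

lemma inf_sq_le (x : D) : A.le (A.inf x x) x := A.inf_le_left x x

lemma le_sup_sq (x : D) : A.le x (A.sup x x) := A.le_sup_left x x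

lemma sq_le_iff {x y : D} : A.le (A.inf x x) y ↔ A.inf x y = A.inf x x := by
  constructor
  · intro h
    have h1 := h.1
    rw [A.ax1a] at h1
    rw [A.inf_idem2] at h1
    exact h1
  · intro h
    apply A.le_of_inf_eq
    rw [A.ax1a, h]

lemma le_sq_iff {x y : D} : A.le x (A.sup y y) ↔ A.sup x y = A.sup y y := by
  constructor
  · intro h
    have h2 := h.2
    rw [A.sup_sup_self] at h2
    rw [A.sup_idem2] at h2
    exact h2
  · intro h
    apply A.le_of_sup_eq
    rw [A.sup_sup_self, h]

lemma neg_antitone' {x y : D} (h : A.inf x y = A.inf x x) :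
    A.inf (A.neg y) (A.neg x) = A.neg y := by
  have h7 := A.ax7a (A.neg y) (A.neg x)
  rw [A.neg_neg' y, A.neg_neg' x, A.inf_inf_self, A.ax1a, A.ax2a y x, h, A.ax4a] at h7
  rw [h7]
  exact A.neg_idem y

lemma neg_le_neg {x y : D} (h : A.inf x y = A.inf x x) :
    A.le (A.neg y) (A.neg x) :=
  A.le_of_inf_eq (A.neg_antitone' h)

lemma dneg_antitone' {x y : D} (h : A.sup x y = A.sup y y) :
    A.sup (A.dneg y) (A.dneg x) = A.dneg x := by
  have h7 := A.ax7b (A.dneg x) (A.dneg y)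
  rw [A.dneg_dneg' x, A.dneg_dneg' y, A.ax1b, A.sup_sup_self, h, A.ax4b, A.dneg_idem] at h7
  rw [A.ax2b]
  exact h7

lemma dneg_le_dneg {x y : D} (h : A.sup x y = A.sup y y) :
    A.le (A.dneg y) (A.dneg x) :=
  A.le_of_sup_eq (A.dneg_antitone' h)

lemma inf_inf_inf_comm (a b c d : D) :
    A.inf (A.inf a b) (A.inf c d) = A.inf (A.inf a c) (A.inf b d) := by
  rw [A.inf_assoc' a b, A.inf_left_comm b c d, ← A.inf_assoc' a c]

lemma sup_sup_sup_comm (a b c d : D) :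
    A.sup (A.sup a b) (A.sup c d) = A.sup (A.sup a c) (A.sup b d) := by
  rw [A.sup_assoc' a b, A.sup_left_comm b c d, ← A.sup_assoc' a c]

lemma inf_le_inf {a b w1 w2 : D} (h1 : A.le a w1) (h2 : A.le b w2) :
    A.le (A.inf a b) (A.inf w1 w2) := by
  apply A.le_of_inf_eq
  rw [A.inf_inf_inf_comm, h1.1, h2.1, ← A.inf_inf_inf_comm a b a b, A.inf_idem2]

lemma sup_le_sup {a b w1 w2 : D} (h1 : A.le a w1) (h2 : A.le b w2) :
    A.le (A.sup a b) (A.sup w1 w2) := by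
  apply A.le_of_sup_eq
  rw [A.sup_sup_sup_comm, h1.2, h2.2, ← A.sup_sup_sup_comm w1 w2 w1 w2, A.sup_idem2]

lemma vee_le {x y z : D} (hx : A.le x z) (hy : A.le y z) :
    A.le (A.neg (A.inf (A.neg x) (A.neg y))) z := by
  apply A.le_of_inf_eq
  rw [A.ax2a, A.ax6a z x y, A.ax2a z x, hx.1, A.ax4a, A.ax2a z y, hy.1, A.ax4a]

lemma le_wedge {x y z : D} (hx : A.le z x) (hy : A.le z y) :
    A.le z (A.dneg (A.sup (A.dneg x) (A.dneg y))) := by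
  apply A.le_of_sup_eq
  rw [A.ax6b z x y, hx.2, A.ax4b, hy.2, A.ax4b]

lemma fork (f z : D) :
    A.neg (A.inf (A.neg (A.inf f z)) (A.neg (A.inf f (A.neg z)))) = A.inf f f := by
  have h6 := A.ax6a f z (A.neg z)
  rw [A.neg_neg' z, A.inf_inf_self, A.ax2a (A.neg z) z, A.ax9a, A.ax10a, A.ax3a,
    A.inf_top, A.inf_top, A.inf_idem2] at h6
  exact h6.symm

lemma fork' (f z : D) :
    A.dneg (A.sup (A.dneg (A.sup f z)) (A.dneg (A.sup f (A.dneg z)))) = A.sup f f := by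
  have h6 := A.ax6b f z (A.dneg z)
  rw [A.dneg_dneg' z, A.sup_sup_self, A.ax2b (A.dneg z) z, A.ax9b, A.ax10b, A.ax3b,
    A.sup_bot, A.sup_bot, A.sup_idem2] at h6
  exact h6.symm

end DBA

namespace DBA

variable {D : Type u} (A : DBA D)

lemma isFilter_up (p : D) (hp : A.inf p p = p) : A.IsFilter {w | A.le p w} := by
  constructor
  · intro x hx y hy
    apply A.le_of_inf_eq
    rw [A.ax3a, hx.1, hp, hy.1, hp]
  · intro x hx z hxz
    exact A.le_trans' hx hxz

lemma isIdeal_down (q : D) (hq : A.sup q q = q) : A.IsIdeal {w | A.le w q} := by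
  constructor
  · intro x hx y hy
    apply A.le_of_sup_eq
    rw [A.sup_assoc', hy.2, hq, hx.2, hq]
  · intro x hx z hzx
    exact A.le_trans' hzx hx

lemma exists_primary_filter_avoid {F0 : Set D} (hF0 : A.IsFilter F0) (hne : F0.Nonempty)
    {y : D} (hy : y ∉ F0) :
    ∃ F : Set D, A.IsPrimaryFilter F ∧ F0 ⊆ F ∧ y ∉ F := by
  obtain ⟨M, hM0, hMmax⟩ := zorn_subset_nonempty {F | A.IsFilter F ∧ y ∉ F}
    (fun c hcS hchain hcne => by
      refine ⟨⋃₀ c, ⟨⟨?_, ?_⟩, ?_⟩, fun s hs => Set.subset_sUnion_of_mem hs⟩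
      · rintro a ⟨s, hs, has⟩ b ⟨t, ht, hbt⟩
        rcases hchain.total hs ht with h | h
        · exact ⟨t, ht, (hcS ht).1.1 a (h has) b hbt⟩
        · exact ⟨s, hs, (hcS hs).1.1 a has b (h hbt)⟩
      · rintro a ⟨s, hs, has⟩ z haz
        exact ⟨s, hs, (hcS hs).1.2 a has z haz⟩
      · rintro ⟨s, hs, hys⟩
        exact (hcS hs).2 hys) F0 ⟨hF0, hy⟩
  have hMfil : A.IsFilter M := hMmax.1.1
  have hyM : y ∉ M := hMmax.1.2
  have hMne : M.Nonempty := hne.mono hM0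
  refine ⟨M, ⟨hMfil, ?_, ?_⟩, hM0, hyM⟩
  · intro h; rw [h] at hyM; exact hyM (Set.mem_univ y)
  · intro z
    by_contra hcon
    push_neg at hcon
    obtain ⟨hz, hnz⟩ := hcon
    have key : ∀ t : D, t ∉ M → ∃ f ∈ M, A.le (A.inf f t) y := by
      intro t ht
      have hfil : A.IsFilter {w | ∃ f ∈ M, A.le (A.inf f t) w} := by
        constructor
        · rintro a ⟨f1, hf1, h1⟩ b ⟨f2, hf2, h2⟩
          refine ⟨A.inf f1 f2, hMfil.1 f1 hf1 f2 hf2, ?_⟩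
          have e : A.inf (A.inf f1 f2) t = A.inf (A.inf f1 t) (A.inf f2 t) := by
            rw [A.inf_inf_inf_comm f1 t f2 t, A.inf_inf_self]
          rw [e]
          exact A.inf_le_inf h1 h2
        · rintro a ⟨f, hf, h⟩ z' haz
          exact ⟨f, hf, A.le_trans' h haz⟩
      have hsub : M ⊆ {w | ∃ f ∈ M, A.le (A.inf f t) w} :=
        fun g hg => ⟨g, hg, A.inf_le_left g t⟩
      obtain ⟨f0, hf0⟩ := hMne
      have hts : t ∈ {w | ∃ f ∈ M, A.le (A.inf f t) w} := ⟨f0, hf0, A.inf_le_right f0 t⟩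
      by_contra hno
      push_neg at hno
      have hyext : y ∉ {w | ∃ f ∈ M, A.le (A.inf f t) w} := by
        rintro ⟨f, hf, hle⟩
        exact hno f hf hle
      have hEM := hMmax.2 ⟨hfil, hyext⟩ hsub
      exact ht (hEM hts)
    obtain ⟨f1, hf1, h1⟩ := key z hz
    obtain ⟨f2, hf2, h2⟩ := key (A.neg z) hnz
    have hfM : A.inf f1 f2 ∈ M := hMfil.1 f1 hf1 f2 hf2
    have e1 : A.inf (A.inf f1 f2) z = A.inf (A.inf f1 z) (A.inf f2 z) := by
      rw [A.inf_inf_inf_comm f1 z f2 z, A.inf_inf_self]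
    have hz1 : A.le (A.inf (A.inf f1 f2) z) y := by
      rw [e1]; exact A.le_trans' (A.inf_le_left _ _) h1
    have e2 : A.inf (A.inf f1 f2) (A.neg z) =
        A.inf (A.inf f1 (A.neg z)) (A.inf f2 (A.neg z)) := by
      rw [A.inf_inf_inf_comm f1 (A.neg z) f2 (A.neg z), A.inf_inf_self]
    have hz2 : A.le (A.inf (A.inf f1 f2) (A.neg z)) y := by
      rw [e2]; exact A.le_trans' (A.inf_le_right _ _) h2
    have hv : A.le (A.inf (A.inf f1 f2) (A.inf f1 f2)) y := by
      have hvle := A.vee_le hz1 hz2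
      rwa [A.fork] at hvle
    exact hyM (hMfil.2 _ (hMfil.1 _ hfM _ hfM) y hv)

lemma exists_primary_ideal_avoid {I0 : Set D} (hI0 : A.IsIdeal I0) (hne : I0.Nonempty)
    {y : D} (hy : y ∉ I0) :
    ∃ I : Set D, A.IsPrimaryIdeal I ∧ I0 ⊆ I ∧ y ∉ I := by
  obtain ⟨M, hM0, hMmax⟩ := zorn_subset_nonempty {I | A.IsIdeal I ∧ y ∉ I}
    (fun c hcS hchain hcne => by
      refine ⟨⋃₀ c, ⟨⟨?_, ?_⟩, ?_⟩, fun s hs => Set.subset_sUnion_of_mem hs⟩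
      · rintro a ⟨s, hs, has⟩ b ⟨t, ht, hbt⟩
        rcases hchain.total hs ht with h | h
        · exact ⟨t, ht, (hcS ht).1.1 a (h has) b hbt⟩
        · exact ⟨s, hs, (hcS hs).1.1 a has b (h hbt)⟩
      · rintro a ⟨s, hs, has⟩ z haz
        exact ⟨s, hs, (hcS hs).1.2 a has z haz⟩
      · rintro ⟨s, hs, hys⟩
        exact (hcS hs).2 hys) I0 ⟨hI0, hy⟩
  have hMidl : A.IsIdeal M := hMmax.1.1
  have hyM : y ∉ M := hMmax.1.2
  have hMne : M.Nonempty := hne.mono hM0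
  refine ⟨M, ⟨hMidl, ?_, ?_⟩, hM0, hyM⟩
  · intro h; rw [h] at hyM; exact hyM (Set.mem_univ y)
  · intro z
    by_contra hcon
    push_neg at hcon
    obtain ⟨hz, hnz⟩ := hcon
    have key : ∀ t : D, t ∉ M → ∃ i ∈ M, A.le y (A.sup i t) := by
      intro t ht
      have hidl : A.IsIdeal {w | ∃ i ∈ M, A.le w (A.sup i t)} := by
        constructor
        · rintro a ⟨i1, hi1, h1⟩ b ⟨i2, hi2, h2⟩
          refine ⟨A.sup i1 i2, hMidl.1 i1 hi1 i2 hi2, ?_⟩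
          have e : A.sup (A.sup i1 i2) t = A.sup (A.sup i1 t) (A.sup i2 t) := by
            rw [A.sup_sup_sup_comm i1 t i2 t, A.sup_sup_self]
          rw [e]
          exact A.sup_le_sup h1 h2
        · rintro a ⟨i, hi, h⟩ z' hza
          exact ⟨i, hi, A.le_trans' hza h⟩
      have hsub : M ⊆ {w | ∃ i ∈ M, A.le w (A.sup i t)} :=
        fun g hg => ⟨g, hg, A.le_sup_left g t⟩
      obtain ⟨i0, hi0⟩ := hMne
      have hts : t ∈ {w | ∃ i ∈ M, A.le w (A.sup i t)} := ⟨i0, hi0, A.le_sup_right i0 t⟩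
      by_contra hno
      push_neg at hno
      have hyext : y ∉ {w | ∃ i ∈ M, A.le w (A.sup i t)} := by
        rintro ⟨i, hi, hle⟩
        exact hno i hi hle
      have hEM := hMmax.2 ⟨hidl, hyext⟩ hsub
      exact ht (hEM hts)
    obtain ⟨i1, hi1, h1⟩ := key z hz
    obtain ⟨i2, hi2, h2⟩ := key (A.dneg z) hnz
    have hiM : A.sup i1 i2 ∈ M := hMidl.1 i1 hi1 i2 hi2
    have e1 : A.sup (A.sup i1 i2) z = A.sup (A.sup i1 z) (A.sup i2 z) := by
      rw [A.sup_sup_sup_comm i1 z i2 z, A.sup_sup_self]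
    have hz1 : A.le y (A.sup (A.sup i1 i2) z) := by
      rw [e1]; exact A.le_trans' h1 (A.le_sup_left _ _)
    have e2 : A.sup (A.sup i1 i2) (A.dneg z) =
        A.sup (A.sup i1 (A.dneg z)) (A.sup i2 (A.dneg z)) := by
      rw [A.sup_sup_sup_comm i1 (A.dneg z) i2 (A.dneg z), A.sup_sup_self]
    have hz2 : A.le y (A.sup (A.sup i1 i2) (A.dneg z)) := by
      rw [e2]; exact A.le_trans' h2 (A.le_sup_right _ _)
    have hv : A.le y (A.sup (A.sup i1 i2) (A.sup i1 i2)) := by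
      have hvle := A.le_wedge hz1 hz2
      rwa [A.fork'] at hvle
    exact hyM (hMidl.2 _ (hMidl.1 _ hiM _ hiM) y hv)

lemma exists_primary_filter_disj {F0 : Set D} (hF0 : A.IsFilter F0) (hne : F0.Nonempty)
    {I : Set D} (hI : A.IsIdeal I) (hIne : I.Nonempty)
    (hdisj : ∀ w ∈ F0, w ∉ I) :
    ∃ F : Set D, A.IsPrimaryFilter F ∧ F0 ⊆ F ∧ ∀ w ∈ F, w ∉ I := by
  obtain ⟨M, hM0, hMmax⟩ := zorn_subset_nonempty {F | A.IsFilter F ∧ ∀ w ∈ F, w ∉ I}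
    (fun c hcS hchain hcne => by
      refine ⟨⋃₀ c, ⟨⟨?_, ?_⟩, ?_⟩, fun s hs => Set.subset_sUnion_of_mem hs⟩
      · rintro a ⟨s, hs, has⟩ b ⟨t, ht, hbt⟩
        rcases hchain.total hs ht with h | h
        · exact ⟨t, ht, (hcS ht).1.1 a (h has) b hbt⟩
        · exact ⟨s, hs, (hcS hs).1.1 a has b (h hbt)⟩
      · rintro a ⟨s, hs, has⟩ z haz
        exact ⟨s, hs, (hcS hs).1.2 a has z haz⟩
      · rintro w ⟨s, hs, hws⟩
        exact (hcS hs).2 w hws) F0 ⟨hF0, hdisj⟩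
  have hMfil : A.IsFilter M := hMmax.1.1
  have hdM : ∀ w ∈ M, w ∉ I := hMmax.1.2
  have hMne : M.Nonempty := hne.mono hM0
  refine ⟨M, ⟨hMfil, ?_, ?_⟩, hM0, hdM⟩
  · obtain ⟨i0, hi0⟩ := hIne
    intro h
    exact hdM i0 (h ▸ Set.mem_univ i0) hi0
  · intro z
    by_contra hcon
    push_neg at hcon
    obtain ⟨hz, hnz⟩ := hcon
    have key : ∀ t : D, t ∉ M → ∃ f ∈ M, ∃ i ∈ I, A.le (A.inf f t) i := by
      intro t ht
      have hfil : A.IsFilter {w | ∃ f ∈ M, A.le (A.inf f t) w} := by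
        constructor
        · rintro a ⟨f1, hf1, h1⟩ b ⟨f2, hf2, h2⟩
          refine ⟨A.inf f1 f2, hMfil.1 f1 hf1 f2 hf2, ?_⟩
          have e : A.inf (A.inf f1 f2) t = A.inf (A.inf f1 t) (A.inf f2 t) := by
            rw [A.inf_inf_inf_comm f1 t f2 t, A.inf_inf_self]
          rw [e]
          exact A.inf_le_inf h1 h2
        · rintro a ⟨f, hf, h⟩ z' haz
          exact ⟨f, hf, A.le_trans' h haz⟩
      have hsub : M ⊆ {w | ∃ f ∈ M, A.le (A.inf f t) w} :=
        fun g hg => ⟨g, hg, A.inf_le_left g t⟩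
      obtain ⟨f0, hf0⟩ := hMne
      have hts : t ∈ {w | ∃ f ∈ M, A.le (A.inf f t) w} := ⟨f0, hf0, A.inf_le_right f0 t⟩
      by_contra hno
      push_neg at hno
      have hext : ∀ w ∈ {w | ∃ f ∈ M, A.le (A.inf f t) w}, w ∉ I := by
        rintro w ⟨f, hf, hle⟩ hwI
        exact hno f hf w hwI hle
      have hEM := hMmax.2 ⟨hfil, hext⟩ hsub
      exact ht (hEM hts)
    obtain ⟨f1, hf1, i1, hi1, h1⟩ := key z hz
    obtain ⟨f2, hf2, i2, hi2, h2⟩ := key (A.neg z) hnz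
    have hfM : A.inf f1 f2 ∈ M := hMfil.1 f1 hf1 f2 hf2
    have hcI : A.sup i1 i2 ∈ I := hI.1 i1 hi1 i2 hi2
    have e1 : A.inf (A.inf f1 f2) z = A.inf (A.inf f1 z) (A.inf f2 z) := by
      rw [A.inf_inf_inf_comm f1 z f2 z, A.inf_inf_self]
    have hz1 : A.le (A.inf (A.inf f1 f2) z) (A.sup i1 i2) := by
      rw [e1]
      exact A.le_trans' (A.le_trans' (A.inf_le_left _ _) h1) (A.le_sup_left i1 i2)
    have e2 : A.inf (A.inf f1 f2) (A.neg z) =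
        A.inf (A.inf f1 (A.neg z)) (A.inf f2 (A.neg z)) := by
      rw [A.inf_inf_inf_comm f1 (A.neg z) f2 (A.neg z), A.inf_inf_self]
    have hz2 : A.le (A.inf (A.inf f1 f2) (A.neg z)) (A.sup i1 i2) := by
      rw [e2]
      exact A.le_trans' (A.le_trans' (A.inf_le_right _ _) h2) (A.le_sup_right i1 i2)
    have hv : A.le (A.inf (A.inf f1 f2) (A.inf f1 f2)) (A.sup i1 i2) := by
      have hvle := A.vee_le hz1 hz2
      rwa [A.fork] at hvle
    have : A.sup i1 i2 ∈ M := hMfil.2 _ (hMfil.1 _ hfM _ hfM) _ hv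
    exact hdM _ this hcI

lemma exists_primary_ideal_disj {I0 : Set D} (hI0 : A.IsIdeal I0) (hne : I0.Nonempty)
    {F : Set D} (hF : A.IsFilter F) (hFne : F.Nonempty)
    (hdisj : ∀ w ∈ I0, w ∉ F) :
    ∃ I : Set D, A.IsPrimaryIdeal I ∧ I0 ⊆ I ∧ ∀ w ∈ I, w ∉ F := by
  obtain ⟨M, hM0, hMmax⟩ := zorn_subset_nonempty {I | A.IsIdeal I ∧ ∀ w ∈ I, w ∉ F}
    (fun c hcS hchain hcne => by
      refine ⟨⋃₀ c, ⟨⟨?_, ?_⟩, ?_⟩, fun s hs => Set.subset_sUnion_of_mem hs⟩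
      · rintro a ⟨s, hs, has⟩ b ⟨t, ht, hbt⟩
        rcases hchain.total hs ht with h | h
        · exact ⟨t, ht, (hcS ht).1.1 a (h has) b hbt⟩
        · exact ⟨s, hs, (hcS hs).1.1 a has b (h hbt)⟩
      · rintro a ⟨s, hs, has⟩ z haz
        exact ⟨s, hs, (hcS hs).1.2 a has z haz⟩
      · rintro w ⟨s, hs, hws⟩
        exact (hcS hs).2 w hws) I0 ⟨hI0, hdisj⟩
  have hMidl : A.IsIdeal M := hMmax.1.1
  have hdM : ∀ w ∈ M, w ∉ F := hMmax.1.2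
  have hMne : M.Nonempty := hne.mono hM0
  refine ⟨M, ⟨hMidl, ?_, ?_⟩, hM0, hdM⟩
  · obtain ⟨f0, hf0⟩ := hFne
    intro h
    exact hdM f0 (h ▸ Set.mem_univ f0) hf0
  · intro z
    by_contra hcon
    push_neg at hcon
    obtain ⟨hz, hnz⟩ := hcon
    have key : ∀ t : D, t ∉ M → ∃ i ∈ M, ∃ f ∈ F, A.le f (A.sup i t) := by
      intro t ht
      have hidl : A.IsIdeal {w | ∃ i ∈ M, A.le w (A.sup i t)} := by
        constructor
        · rintro a ⟨i1, hi1, h1⟩ b ⟨i2, hi2, h2⟩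
          refine ⟨A.sup i1 i2, hMidl.1 i1 hi1 i2 hi2, ?_⟩
          have e : A.sup (A.sup i1 i2) t = A.sup (A.sup i1 t) (A.sup i2 t) := by
            rw [A.sup_sup_sup_comm i1 t i2 t, A.sup_sup_self]
          rw [e]
          exact A.sup_le_sup h1 h2
        · rintro a ⟨i, hi, h⟩ z' hza
          exact ⟨i, hi, A.le_trans' hza h⟩
      have hsub : M ⊆ {w | ∃ i ∈ M, A.le w (A.sup i t)} :=
        fun g hg => ⟨g, hg, A.le_sup_left g t⟩
      obtain ⟨i0, hi0⟩ := hMne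
      have hts : t ∈ {w | ∃ i ∈ M, A.le w (A.sup i t)} := ⟨i0, hi0, A.le_sup_right i0 t⟩
      by_contra hno
      push_neg at hno
      have hext : ∀ w ∈ {w | ∃ i ∈ M, A.le w (A.sup i t)}, w ∉ F := by
        rintro w ⟨i, hi, hle⟩ hwF
        exact hno i hi w hwF hle
      have hEM := hMmax.2 ⟨hidl, hext⟩ hsub
      exact ht (hEM hts)
    obtain ⟨i1, hi1, f1, hf1, h1⟩ := key z hz
    obtain ⟨i2, hi2, f2, hf2, h2⟩ := key (A.dneg z) hnz
    have hiM : A.sup i1 i2 ∈ M := hMidl.1 i1 hi1 i2 hi2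
    have hcF : A.inf f1 f2 ∈ F := hF.1 f1 hf1 f2 hf2
    have e1 : A.sup (A.sup i1 i2) z = A.sup (A.sup i1 z) (A.sup i2 z) := by
      rw [A.sup_sup_sup_comm i1 z i2 z, A.sup_sup_self]
    have hz1 : A.le (A.inf f1 f2) (A.sup (A.sup i1 i2) z) := by
      rw [e1]
      exact A.le_trans' (A.le_trans' (A.inf_le_left f1 f2) h1)
        (A.le_sup_left (A.sup i1 z) (A.sup i2 z))
    have e2 : A.sup (A.sup i1 i2) (A.dneg z) =
        A.sup (A.sup i1 (A.dneg z)) (A.sup i2 (A.dneg z)) := by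
      rw [A.sup_sup_sup_comm i1 (A.dneg z) i2 (A.dneg z), A.sup_sup_self]
    have hz2 : A.le (A.inf f1 f2) (A.sup (A.sup i1 i2) (A.dneg z)) := by
      rw [e2]
      exact A.le_trans' (A.le_trans' (A.inf_le_right f1 f2) h2)
        (A.le_sup_right (A.sup i1 (A.dneg z)) (A.sup i2 (A.dneg z)))
    have hv : A.le (A.inf f1 f2) (A.sup (A.sup i1 i2) (A.sup i1 i2)) := by
      have hvle := A.le_wedge hz1 hz2
      rwa [A.fork'] at hvle
    have : A.sup (A.sup i1 i2) (A.sup i1 i2) ∈ M := hMidl.1 _ hiM _ hiM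
    exact hdM _ this (hF.2 _ hcF _ hv)

end DBA

namespace DBA

variable {D : Type u} (A : DBA D)

lemma pf_bot_notMem {F : Set D} (hF : A.IsPrimaryFilter F) : A.bot ∉ F := fun hb =>
  hF.2.1 (Set.eq_univ_of_forall fun z => hF.1.2 A.bot hb z (A.bot_le z))

lemma pf_neg_mem_iff {F : Set D} (hF : A.IsPrimaryFilter F) (x : D) :
    A.neg x ∈ F ↔ x ∉ F := by
  constructor
  · intro hn hx
    have hb := hF.1.1 x hx (A.neg x) hn
    rw [A.ax9a] at hb
    exact A.pf_bot_notMem hF hb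
  · exact fun h => (hF.2.2 x).resolve_left h

lemma pf_top_mem {F : Set D} (hF : A.IsPrimaryFilter F) : A.top ∈ F := by
  rcases hF.2.2 A.top with h | h
  · exact h
  · rw [A.ax11a] at h
    exact absurd h (A.pf_bot_notMem hF)

lemma pf_inf_mem_iff {F : Set D} (hF : A.IsPrimaryFilter F) (x y : D) :
    A.inf x y ∈ F ↔ x ∈ F ∧ y ∈ F :=
  ⟨fun h => ⟨hF.1.2 _ h x (A.inf_le_left x y), hF.1.2 _ h y (A.inf_le_right x y)⟩,
   fun ⟨h1, h2⟩ => hF.1.1 x h1 y h2⟩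

lemma pi_top_notMem {I : Set D} (hI : A.IsPrimaryIdeal I) : A.top ∉ I := fun hb =>
  hI.2.1 (Set.eq_univ_of_forall fun z => hI.1.2 A.top hb z (A.le_top z))

lemma pi_dneg_mem_iff {I : Set D} (hI : A.IsPrimaryIdeal I) (x : D) :
    A.dneg x ∈ I ↔ x ∉ I := by
  constructor
  · intro hn hx
    have hb := hI.1.1 x hx (A.dneg x) hn
    rw [A.ax9b] at hb
    exact A.pi_top_notMem hI hb
  · exact fun h => (hI.2.2 x).resolve_left h

lemma pi_bot_mem {I : Set D} (hI : A.IsPrimaryIdeal I) : A.bot ∈ I := by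
  rcases hI.2.2 A.bot with h | h
  · exact h
  · rw [A.ax11b] at h
    exact absurd h (A.pi_top_notMem hI)

lemma pi_sup_mem_iff {I : Set D} (hI : A.IsPrimaryIdeal I) (x y : D) :
    A.sup x y ∈ I ↔ x ∈ I ∧ y ∈ I :=
  ⟨fun h => ⟨hI.1.2 _ h x (A.le_sup_left x y), hI.1.2 _ h y (A.le_sup_right x y)⟩,
   fun ⟨h1, h2⟩ => hI.1.1 x h1 y h2⟩

lemma neg_vee (w1 w2 : D) : A.neg (A.vee w1 w2) = A.inf (A.neg w1) (A.neg w2) := by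
  simp only [DBA.vee]
  exact A.ax8a _ _

lemma dneg_wedge (w1 w2 : D) : A.dneg (A.wedge w1 w2) = A.sup (A.dneg w1) (A.dneg w2) := by
  simp only [DBA.wedge]
  exact A.ax8b _ _

end DBA

section SetIdent

variable {D : Type u} (A : DBA D)

lemma mem_Fset {x : D} {F : PrimF A} : F ∈ Fset A x ↔ x ∈ F.val := Iff.rfl

lemma mem_Iset {x : D} {I : PrimI A} : I ∈ Iset A x ↔ x ∈ I.val := Iff.rfl

lemma Fset_compl (x : D) : Fset A (A.neg x) = (Fset A x)ᶜ := by
  ext F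
  simp only [Fset, Set.mem_setOf_eq, Set.mem_compl_iff]
  exact A.pf_neg_mem_iff F.2 x

lemma Iset_compl (x : D) : Iset A (A.dneg x) = (Iset A x)ᶜ := by
  ext I
  simp only [Iset, Set.mem_setOf_eq, Set.mem_compl_iff]
  exact A.pi_dneg_mem_iff I.2 x

lemma Fset_inf (x y : D) : Fset A (A.inf x y) = Fset A x ∩ Fset A y := by
  ext F
  simp only [Fset, Set.mem_setOf_eq, Set.mem_inter_iff]
  exact A.pf_inf_mem_iff F.2 x y

lemma Iset_sup (x y : D) : Iset A (A.sup x y) = Iset A x ∩ Iset A y := by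
  ext I
  simp only [Iset, Set.mem_setOf_eq, Set.mem_inter_iff]
  exact A.pi_sup_mem_iff I.2 x y

lemma Fset_mono {x y : D} (h : A.le x y) : Fset A x ⊆ Fset A y :=
  fun F hF => F.2.1.2 x hF y h

lemma Iset_anti {x y : D} (h : A.le x y) : Iset A y ⊆ Iset A x :=
  fun I hI => I.2.1.2 y hI x h

lemma Fset_sq (x : D) : Fset A (A.inf x x) = Fset A x := by
  apply Set.Subset.antisymm (Fset_mono A (A.inf_sq_le x))
  intro F hF
  exact F.2.1.1 x hF x hF

lemma Iset_sq (x : D) : Iset A (A.sup x x) = Iset A x := by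
  apply Set.Subset.antisymm (Iset_anti A (A.le_sup_sq x))
  intro I hI
  exact I.2.1.1 x hI x hI

lemma Fset_top : Fset A A.top = Set.univ :=
  Set.eq_univ_of_forall fun F => A.pf_top_mem F.2

lemma Fset_bot : Fset A A.bot = ∅ :=
  Set.eq_empty_of_forall_notMem fun F => A.pf_bot_notMem F.2

lemma Iset_bot : Iset A A.bot = Set.univ :=
  Set.eq_univ_of_forall fun I => A.pi_bot_mem I.2

lemma Iset_top : Iset A A.top = ∅ :=
  Set.eq_empty_of_forall_notMem fun I => A.pi_top_notMem I.2

lemma nabla_iff {F : PrimF A} {I : PrimI A} :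
    nabla A F I ↔ ∀ w ∈ F.val, w ∉ I.val := by
  show F.val ∩ I.val = ∅ ↔ _
  rw [Set.eq_empty_iff_forall_notMem]
  constructor
  · intro h w hwF hwI
    exact h w ⟨hwF, hwI⟩
  · rintro h w ⟨h1, h2⟩
    exact h w h1 h2

lemma K1 (z : D) : obbox (nabla A) (Fset A (A.neg z)) = Iset A (A.inf z z) := by
  ext I
  simp only [obbox, Set.mem_setOf_eq, Fset, Iset]
  constructor
  · intro h
    by_contra hzz
    have hup : A.IsFilter {w | A.le (A.inf z z) w} := A.isFilter_up _ (A.inf_idem2 z z)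
    have hdisj : ∀ w ∈ {w | A.le (A.inf z z) w}, w ∉ I.val := by
      intro w hw hwI
      exact hzz (I.2.1.2 w hwI _ hw)
    obtain ⟨F, hFpr, hF0, hFd⟩ := A.exists_primary_filter_disj hup
      ⟨A.inf z z, A.le_refl' _⟩ I.2.1 ⟨A.bot, A.pi_bot_mem I.2⟩ hdisj
    have hzF : z ∈ F := hF0 (A.inf_sq_le z)
    have hnzF : A.neg z ∈ F := h ⟨F, hFpr⟩ ((nabla_iff A).mpr hFd)
    exact ((A.pf_neg_mem_iff hFpr z).mp hnzF) hzF
  · intro h g hg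
    rw [A.pf_neg_mem_iff g.2]
    intro hzg
    have hzz : A.inf z z ∈ g.val := g.2.1.1 z hzg z hzg
    exact ((nabla_iff A).mp hg) _ hzz h

lemma K2 (w : D) : odia (nabla A) (Iset A w) = (Fset A (A.sup w w))ᶜ := by
  ext F
  simp only [odia, Set.mem_setOf_eq, Iset, Fset, Set.mem_compl_iff]
  constructor
  · rintro ⟨I, hwI, hFI⟩
    intro hsF
    have hss : A.sup w w ∈ I.val := I.2.1.1 w hwI w hwI
    exact ((nabla_iff A).mp hFI) _ hsF hss
  · intro hws
    have hdown : A.IsIdeal {v | A.le v (A.sup w w)} := A.isIdeal_down _ (A.sup_idem2 w w)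
    have hdisj : ∀ v ∈ {v | A.le v (A.sup w w)}, v ∉ F.val := fun v hv hvF =>
      hws (F.2.1.2 v hvF _ hv)
    obtain ⟨I, hIpr, hI0, hId⟩ := A.exists_primary_ideal_disj hdown
      ⟨A.sup w w, A.le_refl' _⟩ F.2.1 ⟨A.top, A.pf_top_mem F.2⟩ hdisj
    refine ⟨⟨I, hIpr⟩, hI0 (A.le_sup_sq w), ?_⟩
    exact (nabla_iff A).mpr fun v hvF hvI => hId v hvI hvF

lemma le_iff_sets (x y : D) :
    A.le x y ↔ (Fset A x ⊆ Fset A y ∧ Iset A y ⊆ Iset A x) := by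
  constructor
  · intro h
    exact ⟨Fset_mono A h, Iset_anti A h⟩
  · rintro ⟨h1, h2⟩
    constructor
    · by_contra hne
      have hnle : ¬ A.le (A.inf x x) y := fun hc => hne ((A.sq_le_iff).mp hc)
      have hup : A.IsFilter {w | A.le (A.inf x x) w} := A.isFilter_up _ (A.inf_idem2 x x)
      obtain ⟨F, hFpr, hF0, hFy⟩ := A.exists_primary_filter_avoid hup
        ⟨A.inf x x, A.le_refl' _⟩ hnle
      have hxF : (⟨F, hFpr⟩ : PrimF A) ∈ Fset A x := hF0 (A.inf_sq_le x)
      exact hFy (h1 hxF)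
    · by_contra hne
      have hnle : ¬ A.le x (A.sup y y) := fun hc => hne ((A.le_sq_iff).mp hc)
      have hdown : A.IsIdeal {v | A.le v (A.sup y y)} := A.isIdeal_down _ (A.sup_idem2 y y)
      obtain ⟨I, hIpr, hI0, hIx⟩ := A.exists_primary_ideal_avoid hdown
        ⟨A.sup y y, A.le_refl' _⟩ hnle
      have hyI : (⟨I, hIpr⟩ : PrimI A) ∈ Iset A y := hI0 (A.le_sup_sq y)
      exact hIx (h2 hyI)

end SetIdent

section TopLayer

variable {D : Type u} (A : DBA D)

attribute [local instance] filtTop idlTop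

lemma Fset_neg_isOpen (x : D) : IsOpen (Fset A (A.neg x)) := by
  rw [Fset_compl]
  exact TopologicalSpace.GenerateOpen.basic _ ⟨x, rfl⟩

lemma Fset_isClosed (x : D) : IsClosed (Fset A x) :=
  ⟨TopologicalSpace.GenerateOpen.basic _ ⟨x, rfl⟩⟩

lemma Fset_neg_isClopen (x : D) : IsClopen (Fset A (A.neg x)) :=
  ⟨Fset_isClosed A _, Fset_neg_isOpen A x⟩

lemma Iset_dneg_isOpen (x : D) : IsOpen (Iset A (A.dneg x)) := by
  rw [Iset_compl]
  exact TopologicalSpace.GenerateOpen.basic _ ⟨x, rfl⟩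

lemma Iset_isClosed (x : D) : IsClosed (Iset A x) :=
  ⟨TopologicalSpace.GenerateOpen.basic _ ⟨x, rfl⟩⟩

lemma Iset_isClopen (x : D) : IsClopen (Iset A x) := by
  refine ⟨Iset_isClosed A x, ?_⟩
  have h := Iset_dneg_isOpen A (A.dneg x)
  rwa [A.dneg_dneg', Iset_sq] at h

lemma Fset_neg_isClopen' (x : D) : IsClopen (Fset A x) → True := fun _ => trivial

lemma filt_opens_char {U : Set (PrimF A)} (hU : IsOpen U) :
    ∀ F ∈ U, ∃ w : D, F ∈ Fset A (A.neg w) ∧ Fset A (A.neg w) ⊆ U := by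
  have hU' : TopologicalSpace.GenerateOpen {V | ∃ x : D, V = (Fset A x)ᶜ} U := hU
  clear hU
  induction hU' with
  | basic V hV =>
      obtain ⟨x, rfl⟩ := hV
      intro F hF
      rw [← Fset_compl] at hF ⊢
      exact ⟨x, hF, le_refl _⟩
  | univ =>
      intro F _
      refine ⟨A.bot, ?_, Set.subset_univ _⟩
      show A.neg A.bot ∈ F.val
      rw [A.ax10a]
      exact F.2.1.1 A.top (A.pf_top_mem F.2) A.top (A.pf_top_mem F.2)
  | inter V W hV hW ihV ihW =>
      intro F hF
      obtain ⟨w1, h1, h1s⟩ := ihV F hF.1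
      obtain ⟨w2, h2, h2s⟩ := ihW F hF.2
      refine ⟨A.vee w1 w2, ?_, ?_⟩
      · show F ∈ Fset A (A.neg (A.vee w1 w2))
        rw [A.neg_vee, Fset_inf]
        exact ⟨h1, h2⟩
      · rw [A.neg_vee, Fset_inf]
        exact fun G hG => ⟨h1s hG.1, h2s hG.2⟩
  | sUnion S hS ih =>
      intro F hF
      obtain ⟨V, hVS, hFV⟩ := hF
      obtain ⟨w, h1, h2⟩ := ih V hVS F hFV
      exact ⟨w, h1, h2.trans (Set.subset_sUnion_of_mem hVS)⟩

lemma idl_opens_char {U : Set (PrimI A)} (hU : IsOpen U) :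
    ∀ I ∈ U, ∃ w : D, I ∈ Iset A (A.dneg w) ∧ Iset A (A.dneg w) ⊆ U := by
  have hU' : TopologicalSpace.GenerateOpen {V | ∃ x : D, V = (Iset A x)ᶜ} U := hU
  clear hU
  induction hU' with
  | basic V hV =>
      obtain ⟨x, rfl⟩ := hV
      intro I hI
      rw [← Iset_compl] at hI ⊢
      exact ⟨x, hI, le_refl _⟩
  | univ =>
      intro I _
      refine ⟨A.top, ?_, Set.subset_univ _⟩
      show A.dneg A.top ∈ I.val
      rw [A.ax10b]
      exact I.2.1.1 A.bot (A.pi_bot_mem I.2) A.bot (A.pi_bot_mem I.2)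
  | inter V W hV hW ihV ihW =>
      intro I hI
      obtain ⟨w1, h1, h1s⟩ := ihV I hI.1
      obtain ⟨w2, h2, h2s⟩ := ihW I hI.2
      refine ⟨A.wedge w1 w2, ?_, ?_⟩
      · show I ∈ Iset A (A.dneg (A.wedge w1 w2))
        rw [A.dneg_wedge, Iset_sup]
        exact ⟨h1, h2⟩
      · rw [A.dneg_wedge, Iset_sup]
        exact fun G hG => ⟨h1s hG.1, h2s hG.2⟩
  | sUnion S hS ih =>
      intro I hI
      obtain ⟨V, hVS, hIV⟩ := hI
      obtain ⟨w, h1, h2⟩ := ih V hVS I hIV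
      exact ⟨w, h1, h2.trans (Set.subset_sUnion_of_mem hVS)⟩

lemma filt_isCompact : IsCompact (Set.univ : Set (PrimF A)) := by
  rw [isCompact_iff_ultrafilter_le_nhds]
  intro 𝒰 _
  have hpf : A.IsPrimaryFilter {x : D | Fset A x ∈ 𝒰} := by
    refine ⟨⟨?_, ?_⟩, ?_, ?_⟩
    · intro x hx y hy
      show Fset A (A.inf x y) ∈ 𝒰
      rw [Fset_inf]
      exact Filter.inter_mem hx hy
    · intro x hx z hxz
      exact Filter.mem_of_superset hx (Fset_mono A hxz)
    · intro h
      have hb : Fset A A.bot ∈ 𝒰 := Set.eq_univ_iff_forall.mp h A.bot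
      rw [Fset_bot] at hb
      exact Filter.empty_notMem (𝒰 : Filter (PrimF A)) hb
    · intro x
      rcases Ultrafilter.mem_or_compl_mem 𝒰 (Fset A x) with h | h
      · exact Or.inl h
      · right
        show Fset A (A.neg x) ∈ 𝒰
        rwa [Fset_compl]
  refine ⟨⟨_, hpf⟩, Set.mem_univ _, ?_⟩
  refine (nhds_basis_opens _).ge_iff.mpr ?_
  rintro V ⟨hmem, hopen⟩
  obtain ⟨w, h1, h2⟩ := filt_opens_char A hopen _ hmem
  have h1' : Fset A (A.neg w) ∈ 𝒰 := h1
  exact Filter.mem_of_superset h1' h2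

lemma idl_isCompact : IsCompact (Set.univ : Set (PrimI A)) := by
  rw [isCompact_iff_ultrafilter_le_nhds]
  intro 𝒰 _
  have hpi : A.IsPrimaryIdeal {x : D | Iset A x ∈ 𝒰} := by
    refine ⟨⟨?_, ?_⟩, ?_, ?_⟩
    · intro x hx y hy
      show Iset A (A.sup x y) ∈ 𝒰
      rw [Iset_sup]
      exact Filter.inter_mem hx hy
    · intro x hx z hzx
      exact Filter.mem_of_superset hx (Iset_anti A hzx)
    · intro h
      have hb : Iset A A.top ∈ 𝒰 := Set.eq_univ_iff_forall.mp h A.top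
      rw [Iset_top] at hb
      exact Filter.empty_notMem (𝒰 : Filter (PrimI A)) hb
    · intro x
      rcases Ultrafilter.mem_or_compl_mem 𝒰 (Iset A x) with h | h
      · exact Or.inl h
      · right
        show Iset A (A.dneg x) ∈ 𝒰
        rwa [Iset_compl]
  refine ⟨⟨_, hpi⟩, Set.mem_univ _, ?_⟩
  refine (nhds_basis_opens _).ge_iff.mpr ?_
  rintro V ⟨hmem, hopen⟩
  obtain ⟨w, h1, h2⟩ := idl_opens_char A hopen _ hmem
  have h1' : Iset A (A.dneg w) ∈ 𝒰 := h1
  exact Filter.mem_of_superset h1' h2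

lemma Fset_neg_inf (a b : D) :
    Fset A (A.neg (A.inf a b)) = Fset A (A.neg a) ∪ Fset A (A.neg b) := by
  rw [Fset_compl, Fset_inf, Set.compl_inter, Fset_compl, Fset_compl]

lemma Iset_dneg_sup (a b : D) :
    Iset A (A.dneg (A.sup a b)) = Iset A (A.dneg a) ∪ Iset A (A.dneg b) := by
  rw [Iset_compl, Iset_sup, Set.compl_inter, Iset_compl, Iset_compl]

lemma filt_clopen_char {U : Set (PrimF A)} (hU : IsClopen U) :
    ∃ z : D, U = Fset A (A.neg z) := by
  haveI : CompactSpace (PrimF A) := ⟨filt_isCompact A⟩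
  have hcomp : IsCompact U := hU.1.isCompact
  have hchoice : ∀ F : {F // F ∈ U}, ∃ w : D,
      F.val ∈ Fset A (A.neg w) ∧ Fset A (A.neg w) ⊆ U :=
    fun F => filt_opens_char A hU.2 F.val F.2
  choose w hw1 hw2 using hchoice
  obtain ⟨t, ht⟩ := hcomp.elim_finite_subcover (fun i : {F // F ∈ U} => Fset A (A.neg (w i)))
    (fun i => Fset_neg_isOpen A (w i))
    (fun F hF => Set.mem_iUnion.mpr ⟨⟨F, hF⟩, hw1 ⟨F, hF⟩⟩)
  have hfold : ∀ s : Finset {F // F ∈ U},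
      ∃ z : D, (⋃ i ∈ s, Fset A (A.neg (w i))) = Fset A (A.neg z) := by
    intro s
    haveI := Classical.typeDecidableEq
    induction s using Finset.induction_on with
    | empty =>
        refine ⟨A.top, ?_⟩
        rw [A.ax11a, Fset_bot]
        simp
    | @insert a s hni ih =>
        obtain ⟨z', hz'⟩ := ih
        refine ⟨A.inf (w a) z', ?_⟩
        rw [Finset.set_biUnion_insert, hz', Fset_neg_inf]
  obtain ⟨z, hz⟩ := hfold t
  refine ⟨z, Set.Subset.antisymm ?_ ?_⟩
  · rw [← hz]; exact ht
  · rw [← hz]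
    exact Set.iUnion₂_subset fun i _ => hw2 i

lemma idl_clopen_char {U : Set (PrimI A)} (hU : IsClopen U) :
    ∃ z : D, U = Iset A (A.dneg z) := by
  haveI : CompactSpace (PrimI A) := ⟨idl_isCompact A⟩
  have hcomp : IsCompact U := hU.1.isCompact
  have hchoice : ∀ I : {I // I ∈ U}, ∃ w : D,
      I.val ∈ Iset A (A.dneg w) ∧ Iset A (A.dneg w) ⊆ U :=
    fun I => idl_opens_char A hU.2 I.val I.2
  choose w hw1 hw2 using hchoice
  obtain ⟨t, ht⟩ := hcomp.elim_finite_subcover (fun i : {I // I ∈ U} => Iset A (A.dneg (w i)))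
    (fun i => Iset_dneg_isOpen A (w i))
    (fun I hI => Set.mem_iUnion.mpr ⟨⟨I, hI⟩, hw1 ⟨I, hI⟩⟩)
  have hfold : ∀ s : Finset {I // I ∈ U},
      ∃ z : D, (⋃ i ∈ s, Iset A (A.dneg (w i))) = Iset A (A.dneg z) := by
    intro s
    haveI := Classical.typeDecidableEq
    induction s using Finset.induction_on with
    | empty =>
        refine ⟨A.bot, ?_⟩
        rw [A.ax11b, Iset_top]
        simp
    | @insert a s hni ih =>
        obtain ⟨z', hz'⟩ := ih
        refine ⟨A.sup (w a) z', ?_⟩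
        rw [Finset.set_biUnion_insert, hz', Iset_dneg_sup]
  obtain ⟨z, hz⟩ := hfold t
  refine ⟨z, Set.Subset.antisymm ?_ ?_⟩
  · rw [← hz]; exact ht
  · rw [← hz]
    exact Set.iUnion₂_subset fun i _ => hw2 i

end TopLayer

section Assemble

variable {D : Type u} (A : DBA D)

attribute [local instance] filtTop idlTop

lemma protoEmb_isClopenProto (x : D) : IsClopenProto (nabla A) (protoEmb A x) := by
  refine ⟨?_, Fset_neg_isClopen A x, Iset_isClopen A x⟩
  show odia (nabla A) (obbox (nabla A) (Fset A (A.neg x))) = odia (nabla A) (Iset A x)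
  rw [K1, K2, K2, A.ax12, Fset_sq]

lemma protoEmb_inf (x y : D) :
    protoEmb A (A.inf x y) = pinf (nabla A) (protoEmb A x) (protoEmb A y) := by
  have h1 : Fset A (A.neg (A.inf x y)) = Fset A (A.neg x) ∪ Fset A (A.neg y) :=
    Fset_neg_inf A x y
  refine Prod.ext_iff.mpr ⟨h1, ?_⟩
  show Iset A (A.inf x y) = obbox (nabla A) (Fset A (A.neg x) ∪ Fset A (A.neg y))
  rw [← h1, K1, A.inf_idem2]

lemma protoEmb_sup (x y : D) :
    protoEmb A (A.sup x y) = psup (nabla A) (protoEmb A x) (protoEmb A y) := by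
  refine Prod.ext_iff.mpr ⟨?_, ?_⟩
  · show Fset A (A.neg (A.sup x y)) = odia (nabla A) (Iset A x ∩ Iset A y)
    rw [← Iset_sup, K2, A.sup_idem2, ← Fset_compl]
  · exact Iset_sup A x y

lemma protoEmb_neg (x : D) :
    protoEmb A (A.neg x) = pneg (nabla A) (protoEmb A x) := by
  refine Prod.ext_iff.mpr ⟨?_, ?_⟩
  · exact Fset_compl A (A.neg x)
  · show Iset A (A.neg x) = obbox (nabla A) (Fset A (A.neg x))ᶜ
    rw [← Fset_compl, K1, A.neg_idem]

lemma protoEmb_dneg (x : D) :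
    protoEmb A (A.dneg x) = pdneg (nabla A) (protoEmb A x) := by
  refine Prod.ext_iff.mpr ⟨?_, ?_⟩
  · show Fset A (A.neg (A.dneg x)) = odia (nabla A) (Iset A x)ᶜ
    rw [← Iset_compl, K2, A.dneg_idem, ← Fset_compl]
  · exact Iset_compl A x

lemma protoEmb_top : protoEmb A A.top = ptop := by
  refine Prod.ext_iff.mpr ⟨?_, ?_⟩
  · show Fset A (A.neg A.top) = ∅
    rw [A.ax11a, Fset_bot]
  · exact Iset_top A

lemma protoEmb_bot : protoEmb A A.bot = pbot := by
  refine Prod.ext_iff.mpr ⟨?_, ?_⟩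
  · show Fset A (A.neg A.bot) = Set.univ
    rw [A.ax10a, Fset_sq, Fset_top]
  · exact Iset_bot A

lemma protoEmb_le_iff (x y : D) :
    A.le x y ↔ ple (protoEmb A x) (protoEmb A y) := by
  show _ ↔ (Fset A (A.neg y) ⊆ Fset A (A.neg x) ∧ Iset A y ⊆ Iset A x)
  rw [le_iff_sets]
  have hc : Fset A (A.neg y) ⊆ Fset A (A.neg x) ↔ Fset A x ⊆ Fset A y := by
    rw [Fset_compl, Fset_compl, Set.compl_subset_compl]
  exact ⟨fun ⟨a, b⟩ => ⟨hc.mpr a, b⟩, fun ⟨a, b⟩ => ⟨hc.mp a, b⟩⟩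

lemma protoEmb_eq_le {x y : D} (heq : protoEmb A x = protoEmb A y) :
    A.le x y ∧ A.le y x := by
  have h1 : Fset A (A.neg x) = Fset A (A.neg y) := congrArg Prod.fst heq
  have h2 : Iset A x = Iset A y := congrArg Prod.snd heq
  have ef : Fset A x = Fset A y := by
    calc Fset A x = (Fset A (A.neg x))ᶜ := by rw [Fset_compl, compl_compl]
    _ = (Fset A (A.neg y))ᶜ := by rw [h1]
    _ = Fset A y := by rw [Fset_compl, compl_compl]
  constructor
  · exact (le_iff_sets A x y).mpr ⟨ef.subset, h2.symm.subset⟩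
  · exact (le_iff_sets A y x).mpr ⟨ef.symm.subset, h2.subset⟩

lemma Dp_antisymm_aux {x y : D} (hx : A.inf x x = x) (hy : A.sup y y = y)
    (h1 : A.le x y) (h2 : A.le y x) : x = y := by
  have e1 : x = A.sup x x := by
    calc x = A.inf x x := hx.symm
    _ = A.inf x y := h1.1.symm
    _ = A.inf y x := A.ax2a ..
    _ = A.inf y y := h2.1
    _ = A.inf (A.sup y y) (A.sup y y) := by rw [hy]
    _ = A.sup (A.inf y y) (A.inf y y) := (A.ax12 y).symm
    _ = A.sup (A.inf y x) (A.inf y x) := by rw [h2.1]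
    _ = A.sup (A.inf x y) (A.inf x y) := by rw [A.ax2a y x]
    _ = A.sup (A.inf x x) (A.inf x x) := by rw [h1.1]
    _ = A.sup x x := by rw [hx]
  calc x = A.sup x x := e1
  _ = A.sup y x := h2.2.symm
  _ = A.sup x y := A.ax2b ..
  _ = A.sup y y := h1.2
  _ = y := hy

lemma Dp_antisymm {x y : D} (hx : x ∈ A.Dp) (hy : y ∈ A.Dp)
    (h1 : A.le x y) (h2 : A.le y x) : x = y := by
  rcases hx with hx | hx <;> rcases hy with hy | hy
  · calc x = A.inf x x := hx.symm
    _ = A.inf x y := h1.1.symm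
    _ = A.inf y x := A.ax2a ..
    _ = A.inf y y := h2.1
    _ = y := hy
  · exact Dp_antisymm_aux A hx hy h1 h2
  · exact (Dp_antisymm_aux A hy hx h2 h1).symm
  · calc x = A.sup x x := hx.symm
    _ = A.sup y x := h2.2.symm
    _ = A.sup x y := A.ax2b ..
    _ = A.sup y y := h1.2
    _ = y := hy

lemma protoEmb_bijOn :
    Set.BijOn (protoEmb A) A.Dp {p | IsClopenSemi (nabla A) p} := by
  refine ⟨?_, ?_, ?_⟩
  · intro x hx
    show IsClopenSemi (nabla A) (protoEmb A x)
    refine ⟨?_, Fset_neg_isClopen A x, Iset_isClopen A x⟩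
    rcases hx with hx | hx
    · left
      show obbox (nabla A) (Fset A (A.neg x)) = Iset A x
      rw [K1, (hx : A.inf x x = x)]
    · right
      show odia (nabla A) (Iset A x) = Fset A (A.neg x)
      rw [K2, (hx : A.sup x x = x), ← Fset_compl]
  · intro x hx y hy heq
    obtain ⟨l1, l2⟩ := protoEmb_eq_le A heq
    exact Dp_antisymm A hx hy l1 l2
  · intro p hp
    have hp' : IsClopenSemi (nabla A) p := hp
    obtain ⟨z1, hz1⟩ := filt_clopen_char A hp'.2.1
    obtain ⟨z2, hz2⟩ := idl_clopen_char A hp'.2.2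
    rcases hp'.1 with hsemi | hsemi
    · refine ⟨A.inf z1 z1, Or.inl (A.inf_idem2 z1 z1), ?_⟩
      refine Prod.ext_iff.mpr ⟨?_, ?_⟩
      · show Fset A (A.neg (A.inf z1 z1)) = p.1
        rw [A.ax4a, ← hz1]
      · show Iset A (A.inf z1 z1) = p.2
        rw [← K1, ← hz1, hsemi]
    · refine ⟨A.dneg z2, Or.inr (A.dneg_idem z2), ?_⟩
      refine Prod.ext_iff.mpr ⟨?_, ?_⟩
      · show Fset A (A.neg (A.dneg z2)) = p.1
        rw [← hsemi, hz2, K2, A.dneg_idem, ← Fset_compl]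
      · show Iset A (A.dneg z2) = p.2
        rw [← hz2]

lemma protoEmb_injective (hA : A.Contextual) : Function.Injective (protoEmb A) := by
  intro x y heq
  obtain ⟨l1, l2⟩ := protoEmb_eq_le A heq
  exact hA x y l1 l2

end Assemble

/-- h(x) := (F_{¬x}, I_x) is a well-defined quasi-injective dBa
homomorphism from D into the clopen object oriented protoconcepts of K^T_pr(D); its
restriction to D_p is a dBa isomorphism onto the clopen object oriented semiconcepts;
and h is injective whenever D is contextual. -/
theorem stmt16 {D : Type u} (A : DBA D) :
    (∀ x : D, @IsClopenProto (PrimF A) (PrimI A) (filtTop A) (idlTop A) (nabla A)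
        (protoEmb A x)) ∧
    (∀ x y : D, protoEmb A (A.inf x y) = pinf (nabla A) (protoEmb A x) (protoEmb A y)) ∧
    (∀ x y : D, protoEmb A (A.sup x y) = psup (nabla A) (protoEmb A x) (protoEmb A y)) ∧
    (∀ x : D, protoEmb A (A.neg x) = pneg (nabla A) (protoEmb A x)) ∧
    (∀ x : D, protoEmb A (A.dneg x) = pdneg (nabla A) (protoEmb A x)) ∧
    protoEmb A A.top = ptop ∧
    protoEmb A A.bot = pbot ∧
    (∀ x y : D, A.le x y ↔ ple (protoEmb A x) (protoEmb A y)) ∧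
    Set.BijOn (protoEmb A) A.Dp
      {p | @IsClopenSemi (PrimF A) (PrimI A) (filtTop A) (idlTop A) (nabla A) p} ∧
    (A.Contextual → Function.Injective (protoEmb A)) := by
  exact ⟨protoEmb_isClopenProto A, protoEmb_inf A, protoEmb_sup A, protoEmb_neg A,
    protoEmb_dneg A, protoEmb_top A, protoEmb_bot A, protoEmb_le_iff A,
    protoEmb_bijOn A, protoEmb_injective A⟩
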